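/- Let q = 2ⁿ with n odd and set m = 2^{(n−1)/2} = √(q/2). Then there exists a set A of points of PG(2,q) with |A| = (m−1)q + m such that every line of PG(2,q) meets A in either 0 or m points (i.e. A is a maximal arc of degree m, of Denniston type), and no two points of A (equal or distinct) are conjugate with respect to the pseudo polarity; in particular A is an independent set in the Erdős–Rényi graph ER_q containing no absolute points. -/

import Mathlib

open Projectivization

variable {F : Type} [Field F]

/-- The line of `PG(2,q)` with coefficient vector `u`. -/
def lineSet (u : Fin 3 → F) : Set (Projectivization F (Fin 3 → F)) :=
  {P | u 0 * P.rep 0 + u 1 * P.rep 1 + u 2 * P.rep 2 = 0}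

/-- A set of points of `PG(2,q)` is a line if it is cut out by a nontrivial homogeneous
linear equation. -/
def IsLine (l : Set (Projectivization F (Fin 3 → F))) : Prop :=
  ∃ u : Fin 3 → F, u ≠ 0 ∧ l = lineSet u

/-!
Choose `a ∉ V := {t² + t}`, so that `N(x, y) = x² + xy + ay²` is anisotropic, and an additive
subgroup `H` of size `m` with `H * H ⊆ V`; the arc is `A = {[1 : x : y] | N(x, y) ∈ H}`.
On an affine line `p + t d` the form `N` is `e t² + c t + k` with `e ≠ 0`, so the points of `A` on
it are empty or a coset of the preimage of `H` under the additive map `t ↦ e t² + c t`. That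
preimage has `|H|` elements: the map is bijective if `c = 0`, and otherwise it is two-to-one onto
a subgroup of index two which misses `k`, because `N` has no zero off the origin.
Two points `[1 : z]`, `[1 : w]` are conjugate iff `z₁w₂ + z₂w₁ = 1`, and then
`N(z) N(w) = u² + u + a` for some `u`, since `N` is the norm of `K[ω]`, `ω² + ω + a = 0`;
as `N(z) N(w) ∈ H * H ⊆ V`, this would force `a ∈ V`. Finally `H` is built by adjoining elements
`x ∈ V` with `x H ⊆ V` one at a time: when `|H| = 2^k` these candidates form a subgroup of index
at most `2^(k+1)`, so they are not all in `H` as long as `2k + 1 < n`.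
-/

theorem AddMonoidHom.index_range_eq_two_of_card_ker_eq_two {G : Type*} [AddGroup G] [Finite G]
    (f : G →+ G) (hf : Nat.card f.ker = 2) : f.range.index = 2 := by
  have hker := f.ker.card_mul_index
  have hrange := f.range.card_mul_index
  rw [AddSubgroup.index_ker, hf] at hker
  have hpos : 0 < Nat.card f.range := Nat.card_pos
  nlinarith

theorem AddSubgroup.index_comap_of_index_range_eq_two {G G' : Type*} [AddGroup G]
    [AddCommGroup G'] (f : G →+ G') {H : AddSubgroup G'} (hf : f.range.index = 2)
    (hH : ¬H ≤ f.range) :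
    (H.comap f).index = H.index := by
  have hrel : f.range.relIndex H = 2 := by
    have hdvd : f.range.relIndex H ∣ 2 := hf ▸ AddSubgroup.relIndex_dvd_index_of_normal _ _
    rcases (Nat.dvd_prime Nat.prime_two).mp hdvd with h | h
    · exact absurd (AddSubgroup.relIndex_eq_one.mp h) hH
    · exact h
  have h1 := AddSubgroup.relIndex_mul_index (inf_le_right : H ⊓ f.range ≤ f.range)
  have h2 := AddSubgroup.relIndex_mul_index (inf_le_left : H ⊓ f.range ≤ H)
  rw [AddSubgroup.inf_relIndex_right, hf] at h1
  rw [AddSubgroup.inf_relIndex_left, hrel] at h2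
  rw [AddSubgroup.index_comap]
  omega

theorem AddSubgroup.ncard_setOf_add_mem {G G' : Type*} [AddGroup G] [AddCommGroup G']
    (f : G →+ G') (H : AddSubgroup G') (g : G') {t₀ : G} (ht₀ : f t₀ + g ∈ H) :
    {t | f t + g ∈ H}.ncard = Nat.card (H.comap f) := by
  have hcoset : {t | f t + g ∈ H} = (· + t₀) '' (H.comap f : Set G) := by
    ext t
    refine ⟨fun ht => ⟨t - t₀, ?_, sub_add_cancel t t₀⟩, ?_⟩
    · simpa [map_sub] using H.sub_mem ht ht₀
    · rintro ⟨s, hs, rfl⟩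
      rw [Set.mem_ofPred_eq, map_add, add_assoc]
      exact H.add_mem (H.mem_comap.mp hs) ht₀
  rw [hcoset, Set.ncard_image_of_injective _ (add_left_injective t₀), ← SetLike.coe_sort_coe,
    Nat.card_coe_set_eq]

section TwoTorsion

variable {G : Type*} [AddCommGroup G] {x : G}

def AddSubgroup.extendByTwoTorsion (H : AddSubgroup G) (hx : x + x = 0) : AddSubgroup G where
  carrier := {y | y ∈ H ∨ y + x ∈ H}
  zero_mem' := Or.inl H.zero_mem
  add_mem' := by
    rintro y z (hy | hy) (hz | hz)
    · exact Or.inl (H.add_mem hy hz)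
    · exact Or.inr (by simpa only [add_assoc] using H.add_mem hy hz)
    · exact Or.inr (by simpa only [add_right_comm] using H.add_mem hy hz)
    · refine Or.inl ?_
      have : y + z = y + x + (z + x) := by
        rw [add_add_add_comm, hx, add_zero]
      exact this ▸ H.add_mem hy hz
  neg_mem' := by
    rintro y (hy | hy)
    · exact Or.inl (H.neg_mem hy)
    · refine Or.inr ?_
      have : -y + x = -(y + x) := by rw [neg_add, neg_eq_of_add_eq_zero_right hx]
      exact this ▸ H.neg_mem hy

theorem AddSubgroup.card_extendByTwoTorsion [Finite G] {H : AddSubgroup G} (hx : x + x = 0)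
    (hxH : x ∉ H) : Nat.card (H.extendByTwoTorsion hx) = 2 * Nat.card H := by
  have hcarrier : (H.extendByTwoTorsion hx : Set G) = (H : Set G) ∪ (· + x) ⁻¹' H := rfl
  have hdisj : Disjoint (H : Set G) ((· + x) ⁻¹' H) :=
    Set.disjoint_left.mpr fun y hy hyx => hxH (by simpa using H.sub_mem hyx hy)
  rw [← SetLike.coe_sort_coe, hcarrier, Nat.card_coe_set_eq, Set.ncard_union_eq hdisj,
    Set.ncard_preimage_of_injective_subset_range (add_left_injective x)
      fun y _ => ⟨y - x, sub_add_cancel y x⟩,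
    ← Nat.card_coe_set_eq, SetLike.coe_sort_coe]
  ring

end TwoTorsion

section CharTwo

variable {K : Type*} [Field K] [CharP K 2]

variable (K) in
def quadraticAddHom (e c : K) : K →+ K where
  toFun t := e * t ^ 2 + c * t
  map_zero' := by ring
  map_add' s t := by rw [CharTwo.add_sq]; ring

@[simp]
theorem quadraticAddHom_apply (e c t : K) : quadraticAddHom K e c t = e * t ^ 2 + c * t := rfl

theorem card_ker_quadraticAddHom {e c : K} (he : e ≠ 0) (hc : c ≠ 0) :
    Nat.card (quadraticAddHom K e c).ker = 2 := by
  have hker : ((quadraticAddHom K e c).ker : Set K) = {0, c / e} := by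
    ext t
    have : e * t ^ 2 + c * t = e * t * (t - c / e) := by field_simp; rw [CharTwo.sub_eq_add]
    simp [this, he, sub_eq_zero]
  rw [← SetLike.coe_sort_coe, hker, Nat.card_coe_set_eq, Set.ncard_pair]
  exact (div_ne_zero hc he).symm

variable (K) in
/-- The set `V = {t² + t}`, i.e. the kernel of the absolute trace. -/
def artinSchreier : AddSubgroup K := (quadraticAddHom K 1 1).range

theorem mem_artinSchreier {v : K} : v ∈ artinSchreier K ↔ ∃ t, t ^ 2 + t = v := by
  simp [artinSchreier]

theorem index_artinSchreier [Finite K] : (artinSchreier K).index = 2 :=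
  (quadraticAddHom K 1 1).index_range_eq_two_of_card_ker_eq_two
    (card_ker_quadraticAddHom one_ne_zero one_ne_zero)

theorem exists_notMem_artinSchreier [Finite K] : ∃ a : K, a ∉ artinSchreier K := by
  by_contra! h
  have htop : artinSchreier K = ⊤ := eq_top_iff.mpr fun a _ => h a
  simpa [htop] using index_artinSchreier (K := K)

theorem sq_mem_artinSchreier {v : K} (hv : v ∈ artinSchreier K) : v ^ 2 ∈ artinSchreier K := by
  obtain ⟨t, rfl⟩ := mem_artinSchreier.mp hv
  exact mem_artinSchreier.mpr ⟨t ^ 2, by rw [CharTwo.add_sq]⟩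

theorem ncard_setOf_quadratic_mem [Finite K] (H : AddSubgroup K) {e c k : K} (he : e ≠ 0)
    (hroot : c = 0 ∨ ∀ t, e * t ^ 2 + c * t + k ≠ 0) :
    {t | e * t ^ 2 + c * t + k ∈ H}.ncard = 0 ∨
      {t | e * t ^ 2 + c * t + k ∈ H}.ncard = Nat.card H := by
  set L := quadraticAddHom K e c
  rcases Set.eq_empty_or_nonempty {t | L t + k ∈ H} with hS | ⟨t₀, ht₀⟩
  · exact Or.inl (by simp only [L, quadraticAddHom_apply] at hS; rw [hS, Set.ncard_empty])
  right
  change {t | L t + k ∈ H}.ncard = _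
  rw [H.ncard_setOf_add_mem L k ht₀]
  suffices hindex : (H.comap L).index = H.index by
    have h1 := (H.comap L).card_mul_index
    have h2 := H.card_mul_index
    rw [hindex] at h1
    exact Nat.eq_of_mul_eq_mul_right (Nat.pos_of_ne_zero AddSubgroup.index_ne_zero_of_finite)
      (h1.trans h2.symm)
  by_cases hc : c = 0
  · subst hc
    have hinj : Function.Injective L := fun s t hst =>
      CharTwo.sq_injective (mul_left_cancel₀ he (by simpa [L] using hst))
    exact AddSubgroup.index_comap_of_surjective H (Finite.surjective_of_injective hinj)
  · refine AddSubgroup.index_comap_of_index_range_eq_two L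
      (L.index_range_eq_two_of_card_ker_eq_two (card_ker_quadraticAddHom he hc)) fun hle => ?_
    obtain ⟨s, hs⟩ := hle ht₀
    have hroot₀ : L (t₀ - s) + k = 0 := by rw [map_sub, hs]; abel
    exact hroot.resolve_left hc _ hroot₀

/-- The norm form of the quadratic extension `K[ω]`, `ω² + ω + a = 0`, in the basis `1, ω`. -/
def normForm (a : K) (z : K × K) : K := z.1 ^ 2 + z.1 * z.2 + a * z.2 ^ 2

theorem normForm_eq_zero_iff {a : K} (ha : a ∉ artinSchreier K) {z : K × K} :
    normForm a z = 0 ↔ z = 0 := by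
  refine ⟨fun hz => ?_, fun hz => by simp [hz, normForm]⟩
  obtain ⟨x, y⟩ := z
  by_cases hy : y = 0
  · subst hy
    simpa [normForm] using hz
  · refine absurd (mem_artinSchreier.mpr ⟨x / y, ?_⟩) ha
    simp only [normForm] at hz
    field_simp
    linear_combination hz - a * y ^ 2 * CharTwo.two_eq_zero (R := K)

theorem normForm_add_smul (a : K) (p d : K × K) (t : K) :
    normForm a (p + t • d) =
      normForm a d * t ^ 2 + (p.1 * d.2 + p.2 * d.1) * t + normForm a p := by
  simp only [normForm, Prod.fst_add, Prod.snd_add, Prod.smul_fst, Prod.smul_snd, smul_eq_mul]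
  linear_combination (p.1 * t * d.1 + a * p.2 * t * d.2) * CharTwo.two_eq_zero (R := K)

theorem normForm_mul_normForm (a : K) (z w : K × K) :
    normForm a z * normForm a w =
      normForm a (z.1 * w.1 + z.1 * w.2 + a * z.2 * w.2, z.1 * w.2 + z.2 * w.1) := by
  simp only [normForm]
  linear_combination (-(z.1 ^ 2 * w.1 * w.2) - 2 * a * z.1 * z.2 * w.1 * w.2 - z.1 ^ 2 * w.2 ^ 2
    - a * z.1 * z.2 * w.2 ^ 2) * CharTwo.two_eq_zero (R := K)

theorem one_add_mul_add_mul_ne_zero_of_normForm_mul_mem {a : K} (ha : a ∉ artinSchreier K)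
    {z w : K × K} (hzw : normForm a z * normForm a w ∈ artinSchreier K) :
    1 + z.2 * w.1 + z.1 * w.2 ≠ 0 := by
  intro h
  have hB : z.1 * w.2 + z.2 * w.1 = 1 := by linear_combination h - CharTwo.two_eq_zero (R := K)
  obtain ⟨t, ht⟩ := mem_artinSchreier.mp hzw
  set u := z.1 * w.1 + z.1 * w.2 + a * z.2 * w.2
  rw [normForm_mul_normForm, hB] at ht
  refine ha (mem_artinSchreier.mpr ⟨t + u, ?_⟩)
  simp only [normForm] at ht
  linear_combination ht + (t * u + u ^ 2 + u) * CharTwo.two_eq_zero (R := K)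

theorem ncard_setOf_normForm_add_smul_mem [Finite K] {a : K} (ha : a ∉ artinSchreier K)
    (H : AddSubgroup K) (p : K × K) {d : K × K} (hd : d ≠ 0) :
    {t : K | normForm a (p + t • d) ∈ H}.ncard = 0 ∨
      {t : K | normForm a (p + t • d) ∈ H}.ncard = Nat.card H := by
  simp only [normForm_add_smul]
  refine ncard_setOf_quadratic_mem H (mt (normForm_eq_zero_iff ha).mp hd) ?_
  -- a zero puts the origin on the line, `p = -t • d`, and then `c = 2 t d₁ d₂ = 0`
  by_contra! h
  obtain ⟨hc, t, ht⟩ := h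
  rw [← normForm_add_smul, normForm_eq_zero_iff ha, add_eq_zero_iff_eq_neg] at ht
  refine hc ?_
  rw [ht]
  simp only [Prod.fst_neg, Prod.snd_neg, Prod.smul_fst, Prod.smul_snd, smul_eq_mul]
  linear_combination (-(t * d.1 * d.2)) * CharTwo.two_eq_zero (R := K)

theorem ncard_setOf_mul_sq_mem [Finite K] (H : AddSubgroup K) {e : K} (he : e ≠ 0) :
    {t : K | e * t ^ 2 ∈ H}.ncard = Nat.card H := by
  have h := ncard_setOf_quadratic_mem H (c := 0) (k := 0) he (Or.inl rfl)
  simp only [zero_mul, add_zero] at h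
  exact h.resolve_left ((Set.ncard_pos (Set.toFinite _)).mpr ⟨0, by simp⟩).ne'

open Finset in
theorem ncard_setOf_normForm_mem [Fintype K] {a : K} (ha : a ∉ artinSchreier K)
    (H : AddSubgroup K) :
    {z : K × K | normForm a z ∈ H}.ncard = (Nat.card H - 1) * Fintype.card K + Nat.card H := by
  classical
  have hsum : ∀ e : K, e ≠ 0 → ∑ t : K, (if e * t ^ 2 ∈ H then 1 else 0) = Nat.card H := by
    intro e he
    rw [← card_filter, ← ncard_setOf_mul_sq_mem H he, Set.ncard_eq_toFinset_card',
      Set.toFinset_ofPred]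
  have hsum_erase : ∀ e : K, e ≠ 0 →
      ∑ t ∈ univ.erase 0, (if e * t ^ 2 ∈ H then 1 else 0) = Nat.card H - 1 := by
    intro e he
    have := add_sum_erase univ (fun t => if e * t ^ 2 ∈ H then 1 else 0) (mem_univ 0)
    simp only [ne_eq, OfNat.ofNat_ne_zero, not_false_eq_true, zero_pow, mul_zero,
      H.zero_mem, ite_true, hsum e he] at this
    omega
  have ha0 : a ≠ 0 := fun h => ha (h ▸ (artinSchreier K).zero_mem)
  -- the points with `x = 0`, then the others along the lines `y = m x` through the origin
  have hvert : ∑ y : K, (if normForm a (0, y) ∈ H then 1 else 0) = Nat.card H := by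
    simpa [normForm] using hsum a ha0
  have hslope : ∑ x ∈ univ.erase 0, ∑ y : K, (if normForm a (x, y) ∈ H then 1 else 0) =
      Fintype.card K * (Nat.card H - 1) := calc
    _ = ∑ x ∈ univ.erase 0, ∑ m : K, (if normForm a (1, m) * x ^ 2 ∈ H then 1 else 0) :=
        sum_congr rfl fun x hx => .symm <|
          Fintype.sum_equiv (Equiv.mulRight₀ x (ne_of_mem_erase hx)) _ _ fun m => by
            simp only [Equiv.mulRight₀_apply, normForm]
            ring_nf
    _ = ∑ m : K, (Nat.card H - 1) := by
        rw [sum_comm]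
        exact sum_congr rfl fun m _ =>
          hsum_erase _ (mt (normForm_eq_zero_iff ha).mp (by simp))
    _ = Fintype.card K * (Nat.card H - 1) := by simp
  rw [Set.ncard_eq_toFinset_card', Set.toFinset_ofPred, card_filter, Fintype.sum_prod_type,
    ← add_sum_erase _ _ (mem_univ 0), hvert, hslope, mul_comm]
  omega

def extensionCandidates (H : AddSubgroup K) : AddSubgroup K :=
  artinSchreier K ⊓ ⨅ h ∈ H, (artinSchreier K).comap (AddMonoidHom.mulLeft h)

theorem mem_extensionCandidates {H : AddSubgroup K} {x : K} :
    x ∈ extensionCandidates H ↔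
      x ∈ artinSchreier K ∧ ∀ h ∈ H, h * x ∈ artinSchreier K := by
  simp [extensionCandidates, AddSubgroup.mem_iInf]

theorem mul_mem_artinSchreier_of_mem_extendByTwoTorsion {H : AddSubgroup K}
    (hH : ∀ y ∈ H, ∀ z ∈ H, y * z ∈ artinSchreier K) {x : K} (hx : x ∈ extensionCandidates H) :
    ∀ y ∈ H.extendByTwoTorsion (CharTwo.add_self_eq_zero x),
      ∀ z ∈ H.extendByTwoTorsion (CharTwo.add_self_eq_zero x), y * z ∈ artinSchreier K := by
  obtain ⟨hxV, hxH⟩ := mem_extensionCandidates.mp hx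
  rintro y (hy | hy) z (hz | hz)
  · exact hH y hy z hz
  · have : y * z = y * (z + x) - y * x := by ring
    exact this ▸ sub_mem (hH y hy _ hz) (hxH y hy)
  · have : y * z = (y + x) * z - z * x := by ring
    exact this ▸ sub_mem (hH _ hy z hz) (hxH z hz)
  · have : y * z = (y + x) * (z + x) - (y + x) * x - (z + x) * x + x ^ 2 := by ring
    exact this ▸ add_mem (sub_mem (sub_mem (hH _ hy _ hz) (hxH _ hy)) (hxH _ hz))
      (sq_mem_artinSchreier hxV)

theorem inf_comap_le_extensionCandidates_extendByTwoTorsion (H : AddSubgroup K) (x : K) :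
    extensionCandidates H ⊓ (artinSchreier K).comap (AddMonoidHom.mulLeft x) ≤
      extensionCandidates (H.extendByTwoTorsion (CharTwo.add_self_eq_zero x)) := by
  rintro w ⟨hw, hxw⟩
  obtain ⟨hwV, hwH⟩ := mem_extensionCandidates.mp hw
  refine mem_extensionCandidates.mpr ⟨hwV, ?_⟩
  rintro y (hy | hy)
  · exact hwH y hy
  · have : y * w = (y + x) * w - x * w := by ring
    exact this ▸ sub_mem (hwH _ hy) hxw

theorem index_comap_mulLeft_artinSchreier [Finite K] {x : K} (hx : x ≠ 0) :
    ((artinSchreier K).comap (AddMonoidHom.mulLeft x)).index = 2 := by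
  rw [AddSubgroup.index_comap_of_surjective _ (mul_left_surjective₀ hx), index_artinSchreier]

theorem card_lt_card_extensionCandidates [Fintype K] {n k : ℕ} (hq : Fintype.card K = 2 ^ n)
    (hk : 2 * k + 1 < n) {H : AddSubgroup K} (hcard : Nat.card H = 2 ^ k)
    (hindex : (extensionCandidates H).index ≤ 2 ^ (k + 1)) :
    Nat.card H < Nat.card (extensionCandidates H) := by
  by_contra! hle
  have hmul := (extensionCandidates H).card_mul_index
  rw [Nat.card_eq_fintype_card (α := K), hq] at hmul
  have : 2 ^ n ≤ 2 ^ (2 * k + 1) := calc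
    2 ^ n = _ := hmul.symm
    _ ≤ 2 ^ k * 2 ^ (k + 1) := Nat.mul_le_mul (hcard ▸ hle) hindex
    _ = 2 ^ (2 * k + 1) := by ring
  exact absurd this (Nat.not_le.mpr (Nat.pow_lt_pow_right (by norm_num) hk))

theorem exists_addSubgroup_card_eq_mul_mem_artinSchreier [Fintype K] {n : ℕ}
    (hq : Fintype.card K = 2 ^ n) (k : ℕ) (hk : 2 * k + 1 ≤ n) :
    ∃ H : AddSubgroup K, Nat.card H = 2 ^ k ∧ (∀ y ∈ H, ∀ z ∈ H, y * z ∈ artinSchreier K) ∧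
      (extensionCandidates H).index ≤ 2 ^ (k + 1) := by
  induction k with
  | zero =>
    refine ⟨⊥, by simp, fun y hy z _ => by simp [(AddSubgroup.mem_bot.mp hy)], ?_⟩
    calc (extensionCandidates ⊥).index ≤ (artinSchreier K).index :=
          AddSubgroup.index_antitone fun x hx => mem_extensionCandidates.mpr ⟨hx, by simp⟩
      _ = 2 ^ (0 + 1) := index_artinSchreier
  | succ k ih =>
    obtain ⟨H, hcard, hH, hindex⟩ := ih (by omega)
    obtain ⟨x, hxC, hxH⟩ := Set.not_subset.mp fun hle =>
      (card_lt_card_extensionCandidates hq (by omega) hcard hindex).not_ge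
        (AddSubgroup.card_le_of_le hle)
    have hx0 : x ≠ 0 := fun h => hxH (h ▸ H.zero_mem)
    refine ⟨H.extendByTwoTorsion (CharTwo.add_self_eq_zero x), ?_,
      mul_mem_artinSchreier_of_mem_extendByTwoTorsion hH hxC, ?_⟩
    · rw [AddSubgroup.card_extendByTwoTorsion _ hxH, hcard, pow_succ]
      ring
    · calc _ ≤ (extensionCandidates H ⊓
              (artinSchreier K).comap (AddMonoidHom.mulLeft x)).index :=
            AddSubgroup.index_antitone (inf_comap_le_extensionCandidates_extendByTwoTorsion H x)
        _ ≤ 2 ^ (k + 1) * 2 :=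
            AddSubgroup.index_inf_le.trans (Nat.mul_le_mul hindex
              (index_comap_mulLeft_artinSchreier hx0).le)
        _ = 2 ^ (k + 1 + 1) := by ring

end CharTwo

section Projective

variable {K : Type} [Field K]

def affinePoint (z : K × K) : Projectivization K (Fin 3 → K) :=
  mk K ![1, z.1, z.2] fun h => by simpa using congrFun h 0

theorem exists_rep_affinePoint (z : K × K) :
    ∃ c : K, c ≠ 0 ∧ (affinePoint z).rep = c • ![1, z.1, z.2] := by
  obtain ⟨c, hc⟩ := exists_smul_eq_mk_rep K ![1, z.1, z.2] fun h => by simpa using congrFun h 0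
  exact ⟨c, c.ne_zero, hc.symm⟩

theorem affinePoint_injective : Function.Injective (affinePoint (K := K)) := by
  intro z w h
  obtain ⟨c, hc⟩ := (mk_eq_mk_iff' K _ _ _ _).mp h
  have h0 := congrFun hc 0
  have h1 := congrFun hc 1
  have h2 := congrFun hc 2
  simp only [Pi.smul_apply, smul_eq_mul, Matrix.cons_val_zero, Matrix.cons_val_one,
    Matrix.cons_val_two, Matrix.head_cons, Matrix.tail_cons, mul_one] at h0 h1 h2
  subst h0
  exact Prod.ext (by simpa using h1.symm) (by simpa using h2.symm)

theorem affinePoint_mem_lineSet_iff (u : Fin 3 → K) (z : K × K) :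
    affinePoint z ∈ lineSet u ↔ u 0 + u 1 * z.1 + u 2 * z.2 = 0 := by
  obtain ⟨c, hc, hrep⟩ := exists_rep_affinePoint z
  have : u 0 * (affinePoint z).rep 0 + u 1 * (affinePoint z).rep 1 +
      u 2 * (affinePoint z).rep 2 = c * (u 0 + u 1 * z.1 + u 2 * z.2) := by
    simp [hrep]
    ring
  simp only [lineSet, Set.mem_ofPred_eq, this, mul_eq_zero, hc, false_or]

theorem exists_eq_range_of_affine_line {u₀ u₁ u₂ : K} (hu : u₁ ≠ 0 ∨ u₂ ≠ 0) :
    ∃ p d : K × K, d ≠ 0 ∧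
      {z : K × K | u₀ + u₁ * z.1 + u₂ * z.2 = 0} = Set.range fun t : K => p + t • d := by
  by_cases hu₂ : u₂ = 0
  · have hu₁ : u₁ ≠ 0 := hu.resolve_right (not_not.mpr hu₂)
    subst hu₂
    refine ⟨(-u₀ / u₁, 0), (0, 1), by simp,
      Set.ext fun z => ⟨fun (hz : u₀ + u₁ * z.1 + 0 * z.2 = 0) => ⟨z.2, ?_⟩, ?_⟩⟩
    · refine Prod.ext ?_ (by simp)
      simp only [Prod.fst_add, Prod.smul_fst, smul_eq_mul, mul_zero, add_zero]
      rw [div_eq_iff hu₁]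
      linear_combination -hz
    · rintro ⟨t, rfl⟩
      simp only [Set.mem_ofPred_eq, Prod.fst_add, Prod.snd_add, Prod.smul_fst, Prod.smul_snd]
      field_simp
      ring
  · refine ⟨(0, -u₀ / u₂), (u₂, -u₁), by simp [hu₂],
      Set.ext fun z => ⟨fun (hz : u₀ + u₁ * z.1 + u₂ * z.2 = 0) => ⟨z.1 / u₂, ?_⟩, ?_⟩⟩
    · refine Prod.ext (by simp [hu₂]) ?_
      simp only [Prod.snd_add, Prod.smul_snd, smul_eq_mul]
      field_simp
      linear_combination -hz
    · rintro ⟨t, rfl⟩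
      simp only [Set.mem_ofPred_eq, Prod.fst_add, Prod.snd_add, Prod.smul_fst, Prod.smul_snd,
        smul_eq_mul]
      field_simp
      ring

variable [CharP K 2]

theorem ncard_image_affinePoint_inter_lineSet [Finite K] {a : K} (ha : a ∉ artinSchreier K)
    (H : AddSubgroup K) {u : Fin 3 → K} (hu : u ≠ 0) :
    (affinePoint '' {z | normForm a z ∈ H} ∩ lineSet u).ncard = 0 ∨
      (affinePoint '' {z | normForm a z ∈ H} ∩ lineSet u).ncard = Nat.card H := by
  have hpre : affinePoint ⁻¹' lineSet u = {z : K × K | u 0 + u 1 * z.1 + u 2 * z.2 = 0} :=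
    Set.ext fun z => affinePoint_mem_lineSet_iff u z
  rw [← Set.image_inter_preimage, Set.ncard_image_of_injective _ affinePoint_injective, hpre]
  by_cases h : u 1 ≠ 0 ∨ u 2 ≠ 0
  · obtain ⟨p, d, hd, hline⟩ := exists_eq_range_of_affine_line h
    rw [hline, ← Set.image_preimage_eq_inter_range, Set.ncard_image_of_injective _
      fun s t hst => smul_left_injective K hd (add_left_cancel hst)]
    exact ncard_setOf_normForm_add_smul_mem ha H p hd
  · push Not at h
    have hu₀ : u 0 ≠ 0 := fun h₀ => hu (funext fun i => by fin_cases i <;> simp [h₀, h.1, h.2])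
    left
    simp [h.1, h.2, hu₀]

theorem rep_conj_affinePoint_ne_zero {a : K} (ha : a ∉ artinSchreier K) {z w : K × K}
    (hzw : normForm a z * normForm a w ∈ artinSchreier K) :
    (affinePoint z).rep 0 * (affinePoint w).rep 0 +
      (affinePoint z).rep 2 * (affinePoint w).rep 1 +
      (affinePoint z).rep 1 * (affinePoint w).rep 2 ≠ 0 := by
  obtain ⟨c, hc, hz⟩ := exists_rep_affinePoint z
  obtain ⟨c', hc', hw⟩ := exists_rep_affinePoint w
  rw [hz, hw]
  simp only [Pi.smul_apply, smul_eq_mul, Matrix.cons_val_zero, Matrix.cons_val_one,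
    Matrix.cons_val_two, Matrix.head_cons, Matrix.tail_cons]
  rw [show c * 1 * (c' * 1) + c * z.2 * (c' * w.1) + c * z.1 * (c' * w.2) =
    c * c' * (1 + z.2 * w.1 + z.1 * w.2) by ring]
  exact mul_ne_zero (mul_ne_zero hc hc') (one_add_mul_add_mul_ne_zero_of_normForm_mul_mem ha hzw)

end Projective

/-- Let `q = 2ⁿ` with `n` odd and `m = 2^{(n-1)/2} = √(q/2)`. Then there is a maximal
arc `A` of degree `m` in `PG(2,q)` (a set of `(m-1)q + m` points meeting every line in
`0` or `m` points) no two points of which (equal or distinct) are conjugate with respect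
to the pseudo polarity; in particular `A` is an independent set of the Erdős–Rényi graph
`ER_q` containing no absolute points. -/
theorem exists_maximal_arc_coclique
    (n q m : ℕ) (hn : Odd n) (hq : q = 2 ^ n) (hm : m = 2 ^ ((n - 1) / 2))
    [Fintype F] (hF : Fintype.card F = q) :
    ∃ A : Set (Projectivization F (Fin 3 → F)),
      A.ncard = (m - 1) * q + m ∧
      (∀ l : Set (Projectivization F (Fin 3 → F)), IsLine l →
        (A ∩ l).ncard = 0 ∨ (A ∩ l).ncard = m) ∧
      (∀ P ∈ A, ∀ Q ∈ A,
        P.rep 0 * Q.rep 0 + P.rep 2 * Q.rep 1 + P.rep 1 * Q.rep 2 ≠ 0) := by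
  subst hq hm
  have : CharP F 2 := charP_of_card_eq_prime_pow hF
  obtain ⟨a, ha⟩ := exists_notMem_artinSchreier (K := F)
  obtain ⟨H, hcard, hH, -⟩ := exists_addSubgroup_card_eq_mul_mem_artinSchreier hF ((n - 1) / 2)
    (by obtain ⟨j, rfl⟩ := hn; omega)
  refine ⟨affinePoint '' {z | normForm a z ∈ H}, ?_, ?_, ?_⟩
  · rw [Set.ncard_image_of_injective _ affinePoint_injective, ncard_setOf_normForm_mem ha, hcard,
      hF]
  · rintro l ⟨u, hu, rfl⟩
    exact hcard ▸ ncard_image_affinePoint_inter_lineSet ha H hu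
  · rintro _ ⟨z, hz, rfl⟩ _ ⟨w, hw, rfl⟩
    exact rep_conj_affinePoint_ne_zero ha (hH _ hz _ hw)
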